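/- Let G = (V, E) be a DAG on a finite vertex set with source s and destination t, s ≠ t, in which every vertex and every edge lies on some directed s-t path, and let T ⊆ V. Then T is a tracking set for G (i.e., for any two distinct directed s-t paths P₁ and P₂, T ∩ V(P₁) ≠ T ∩ V(P₂)) if and only if T satisfies the tracking set condition: for every pair of vertices u, v ∈ T ∪ {s, t}, there is at most one directed path from u to v all of whose vertices lie in V ∖ (T ∖ {u, v}). -/

import Mathlib

/-- `IsPathList E u v l` means that `l` is a directed `u`-`v` path of the directed graph
`E`: a list of pairwise distinct vertices starting at `u` and ending at `v` in which
every pair of consecutive vertices is joined by an edge of `E`. -/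
def IsPathList {V : Type*} (E : V → V → Prop) (u v : V) (l : List V) : Prop :=
  l.Chain' E ∧ l.head? = some u ∧ l.getLast? = some v ∧ l.Nodup

section Aux
variable {V : Type*} {E : V → V → Prop}

lemma aux_pairwise {l : List V} (h : l.Chain' E) :
    l.Pairwise (Relation.TransGen E) := by
  haveI : IsTrans V (Relation.TransGen E) := ⟨fun _ _ _ => Relation.TransGen.trans⟩
  exact List.isChain_iff_pairwise.mp (h.imp fun _ _ hab => Relation.TransGen.single hab)

lemma aux_mem_getLast? {l : List V} {a : V} (h : l.getLast? = some a) : a ∈ l := by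
  cases l with
  | nil => simp at h
  | cons x xs =>
    rw [List.getLast?_eq_getLast (l := x :: xs) (by simp)] at h
    exact (Option.some_inj.mp h) ▸ List.getLast_mem _

lemma aux_head_eq {u v : V} {l : List V} (h : IsPathList E u v l) :
    ∃ m, l = u :: m := by
  obtain ⟨_, h2, _, _⟩ := h
  cases l with
  | nil => simp at h2
  | cons a m => simp at h2; exact ⟨m, by rw [h2]⟩

lemma aux_single {u : V} {l : List V} (h : IsPathList E u u l) : l = [u] := by
  obtain ⟨m, rfl⟩ := aux_head_eq h
  cases m with
  | nil => rfl
  | cons b m' =>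
    exfalso
    have hlast : u ∈ b :: m' := by
      have := h.2.2.1
      rw [List.getLast?_cons_cons] at this
      exact aux_mem_getLast? this
    have hnd := h.2.2.2
    simp [List.nodup_cons] at hnd
    rcases List.mem_cons.mp hlast with rfl | h'
    · exact hnd.1.1 rfl
    · exact hnd.1.2 h'

lemma aux_split_first (S : Set V) [DecidablePred (· ∈ S)] :
    ∀ (m : List V), (∃ x ∈ m, x ∈ S) →
      ∃ m₁ a m₂, m = m₁ ++ a :: m₂ ∧ a ∈ S ∧ ∀ x ∈ m₁, x ∉ S := by
  intro m
  induction m with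
  | nil => simp
  | cons y ys ih =>
    intro h
    by_cases hy : y ∈ S
    · exact ⟨[], y, ys, rfl, hy, by simp⟩
    · obtain ⟨x, hx, hxS⟩ := h
      have hx' : x ∈ ys := by
        rcases List.mem_cons.mp hx with rfl | h'
        · exact absurd hxS hy
        · exact h'
      obtain ⟨m₁, a, m₂, heq, ha, hm₁⟩ := ih ⟨x, hx', hxS⟩
      refine ⟨y :: m₁, a, m₂, by rw [heq]; rfl, ha, ?_⟩
      intro z hz
      rcases List.mem_cons.mp hz with rfl | h'
      · exact hy
      · exact hm₁ z h'

end Aux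

section Key
variable {V : Type*} {E : V → V → Prop}

lemma aux_key (S : Set V) [DecidablePred (· ∈ S)] (t : V) (ht : t ∈ S)
    (hcond : ∀ u ∈ S, ∀ v ∈ S, ∀ l₁ l₂ : List V, IsPathList E u v l₁ → IsPathList E u v l₂ →
      (∀ w ∈ l₁, w ∈ S → w = u ∨ w = v) → (∀ w ∈ l₂, w ∈ S → w = u ∨ w = v) → l₁ = l₂) :
    ∀ n (u : V) (l₁ l₂ : List V), l₁.length ≤ n → u ∈ S →
      IsPathList E u t l₁ → IsPathList E u t l₂ →
      l₁.filter (fun x => decide (x ∈ S)) = l₂.filter (fun x => decide (x ∈ S)) →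
      l₁ = l₂ := by
  intro n
  induction n with
  | zero =>
    intro u l₁ l₂ hlen hu h₁ h₂ hfil
    obtain ⟨m, rfl⟩ := aux_head_eq h₁
    simp at hlen
  | succ n ih =>
    intro u l₁ l₂ hlen hu h₁ h₂ hfil
    obtain ⟨m, rfl⟩ := aux_head_eq h₁
    obtain ⟨m', rfl⟩ := aux_head_eq h₂
    by_cases hut : u = t
    · subst hut
      have e1 := aux_single h₁
      have e2 := aux_single h₂
      rw [e1, e2]
    · -- t is in the tails
      have ht₁ : t ∈ m := by
        rcases List.mem_cons.mp (aux_mem_getLast? h₁.2.2.1) with h | h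
        · exact absurd h.symm hut
        · exact h
      have ht₂ : t ∈ m' := by
        rcases List.mem_cons.mp (aux_mem_getLast? h₂.2.2.1) with h | h
        · exact absurd h.symm hut
        · exact h
      obtain ⟨m₁, a, m₂, hm, haS, hm₁⟩ := aux_split_first S m ⟨t, ht₁, ht⟩
      obtain ⟨n₁, b, n₂, hn, hbS, hn₁⟩ := aux_split_first S m' ⟨t, ht₂, ht⟩
      subst hm hn
      -- compute filters
      have fm₁ : m₁.filter (fun x => decide (x ∈ S)) = [] :=
        List.filter_eq_nil_iff.mpr (fun x hx => by simpa using hm₁ x hx)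
      have fn₁ : n₁.filter (fun x => decide (x ∈ S)) = [] :=
        List.filter_eq_nil_iff.mpr (fun x hx => by simpa using hn₁ x hx)
      have hfil' : (u :: a :: m₂.filter (fun x => decide (x ∈ S)))
          = (u :: b :: n₂.filter (fun x => decide (x ∈ S))) := by
        have e1 : (u :: (m₁ ++ a :: m₂)).filter (fun x => decide (x ∈ S))
            = u :: a :: m₂.filter (fun x => decide (x ∈ S)) := by
          simp [List.filter_cons, List.filter_append, fm₁, hu, haS]
        have e2 : (u :: (n₁ ++ b :: n₂)).filter (fun x => decide (x ∈ S))
            = u :: b :: n₂.filter (fun x => decide (x ∈ S)) := by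
          simp [List.filter_cons, List.filter_append, fn₁, hu, hbS]
        rw [← e1, ← e2, hfil]
      rw [List.cons.injEq, List.cons.injEq] at hfil'
      obtain ⟨-, hab, hfil₂⟩ := hfil'
      subst hab
      -- the initial segments
      have hpre₁ : (u :: (m₁ ++ [a])) <+: (u :: (m₁ ++ a :: m₂)) := ⟨m₂, by simp⟩
      have hpre₂ : (u :: (n₁ ++ [a])) <+: (u :: (n₁ ++ a :: n₂)) := ⟨n₂, by simp⟩
      have hseg₁ : IsPathList E u a (u :: (m₁ ++ [a])) := by
        refine ⟨h₁.1.prefix hpre₁, rfl, ?_, (hpre₁.sublist).nodup h₁.2.2.2⟩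
        show ((u :: m₁) ++ [a]).getLast? = some a
        exact List.getLast?_concat
      have hseg₂ : IsPathList E u a (u :: (n₁ ++ [a])) := by
        refine ⟨h₂.1.prefix hpre₂, rfl, ?_, (hpre₂.sublist).nodup h₂.2.2.2⟩
        show ((u :: n₁) ++ [a]).getLast? = some a
        exact List.getLast?_concat
      have hav₁ : ∀ w ∈ (u :: (m₁ ++ [a])), w ∈ S → w = u ∨ w = a := by
        intro w hw hwS
        rcases List.mem_cons.mp hw with rfl | hw'
        · exact Or.inl rfl
        · rcases List.mem_append.mp hw' with hw'' | hw''
          · exact absurd hwS (hm₁ w hw'')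
          · exact Or.inr (List.mem_singleton.mp hw'')
      have hav₂ : ∀ w ∈ (u :: (n₁ ++ [a])), w ∈ S → w = u ∨ w = a := by
        intro w hw hwS
        rcases List.mem_cons.mp hw with rfl | hw'
        · exact Or.inl rfl
        · rcases List.mem_append.mp hw' with hw'' | hw''
          · exact absurd hwS (hn₁ w hw'')
          · exact Or.inr (List.mem_singleton.mp hw'')
      have hseg : m₁ = n₁ := by
        have := hcond u hu a haS _ _ hseg₁ hseg₂ hav₁ hav₂
        rw [List.cons.injEq] at this
        exact List.append_cancel_right this.2
      subst hseg
      -- the tails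
      have hsuf₁ : (a :: m₂) <:+ (u :: (m₁ ++ a :: m₂)) := ⟨u :: m₁, by simp⟩
      have hsuf₂ : (a :: n₂) <:+ (u :: (m₁ ++ a :: n₂)) := ⟨u :: m₁, by simp⟩
      have hlast₁ : (a :: m₂).getLast? = some t := by
        have e : (u :: (m₁ ++ a :: m₂)) = (u :: m₁) ++ (a :: m₂) := by simp
        have := h₁.2.2.1
        rw [e, List.getLast?_append, List.getLast?_eq_getLast (l := a :: m₂) (by simp),
          Option.some_or] at this
        rw [List.getLast?_eq_getLast (l := a :: m₂) (by simp), this]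
      have hlast₂ : (a :: n₂).getLast? = some t := by
        have e : (u :: (m₁ ++ a :: n₂)) = (u :: m₁) ++ (a :: n₂) := by simp
        have := h₂.2.2.1
        rw [e, List.getLast?_append, List.getLast?_eq_getLast (l := a :: n₂) (by simp),
          Option.some_or] at this
        rw [List.getLast?_eq_getLast (l := a :: n₂) (by simp), this]
      have htl₁ : IsPathList E a t (a :: m₂) :=
        ⟨h₁.1.suffix hsuf₁, rfl, hlast₁, (hsuf₁.sublist).nodup h₁.2.2.2⟩
      have htl₂ : IsPathList E a t (a :: n₂) :=
        ⟨h₂.1.suffix hsuf₂, rfl, hlast₂, (hsuf₂.sublist).nodup h₂.2.2.2⟩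
      have hlen' : (a :: m₂).length ≤ n := by
        simp only [List.length_cons, List.length_append] at hlen ⊢
        omega
      have htails := ih a _ _ hlen' haS htl₁ htl₂ (by
        simpa [List.filter_cons, haS] using hfil₂)
      rw [List.cons.injEq] at htails
      rw [htails.2]

lemma aux_getLast?_append {V : Type*} {xs ys : List V} (h : ys ≠ []) :
    (xs ++ ys).getLast? = ys.getLast? := by
  rw [List.getLast?_append, List.getLast?_eq_getLast h, Option.some_or]

lemma aux_splice (hdag : ∀ v, ¬ Relation.TransGen E v v) {s t u v : V}
    (huv : u ≠ v) {A B C D l : List V}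
    (hP : IsPathList E s t (A ++ u :: B)) (hQ : IsPathList E s t (C ++ v :: D))
    (hl : IsPathList E u v l) :
    IsPathList E s t (A ++ l ++ D) := by
  obtain ⟨mid, rfl⟩ := aux_head_eq hl
  have hvl : v ∈ mid := by
    rcases List.mem_cons.mp (aux_mem_getLast? hl.2.2.1) with h | h
    · exact absurd h.symm huv
    · exact h
  -- edge facts
  have cP := hP.1
  rw [List.Chain', List.isChain_append] at cP
  obtain ⟨cA, cuB, jA⟩ := cP
  have cQ := hQ.1
  rw [List.Chain', List.isChain_append] at cQ
  obtain ⟨cC, cvD, jC⟩ := cQ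
  rw [List.isChain_cons] at cvD
  obtain ⟨jv, cD⟩ := cvD
  -- reachability facts
  have pP := aux_pairwise hP.1
  rw [List.pairwise_append] at pP
  have hAu : ∀ x ∈ A, Relation.TransGen E x u := fun x hx => pP.2.2 x hx u (by simp)
  have pQ := aux_pairwise hQ.1
  rw [List.pairwise_append] at pQ
  have pvD := pQ.2.1
  rw [List.pairwise_cons] at pvD
  have hvD : ∀ x ∈ D, Relation.TransGen E v x := pvD.1
  have pl := aux_pairwise hl.1
  rw [List.pairwise_cons] at pl
  have hul : ∀ x ∈ mid, Relation.TransGen E u x := pl.1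
  have hlv : ∀ x ∈ u :: mid, x ≠ v → Relation.TransGen E x v := by
    intro x hx hxv
    have hne : (u :: mid) ≠ [] := by simp
    have hlast : (u :: mid).getLast hne = v := by
      have h := hl.2.2.1
      rw [List.getLast?_eq_getLast hne] at h
      exact Option.some_inj.mp h
    have e := List.dropLast_append_getLast hne
    rw [hlast] at e
    have pl' := aux_pairwise hl.1
    rw [← e, List.pairwise_append] at pl'
    rcases (by rw [← e] at hx; exact List.mem_append.mp hx :
        x ∈ (u :: mid).dropLast ∨ x ∈ [v]) with h | h
    · exact pl'.2.2 x h v (by simp)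
    · exact absurd (List.mem_singleton.mp h) hxv
  -- nodup facts
  have nP := hP.2.2.2
  rw [List.nodup_append] at nP
  have nA : A.Nodup := nP.1
  have huA : u ∉ A := fun h => nP.2.2 u h u (by simp) rfl
  have nQ := hQ.2.2.2
  rw [List.nodup_append] at nQ
  have nvD := nQ.2.1
  rw [List.nodup_cons] at nvD
  have hvDn : v ∉ D := nvD.1
  have nD : D.Nodup := nvD.2
  have huvT : Relation.TransGen E u v := hul v hvl
  refine ⟨?_, ?_, ?_, ?_⟩
  · -- chain'
    rw [List.append_assoc, List.Chain', List.isChain_append]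
    refine ⟨cA, ?_, ?_⟩
    · rw [List.isChain_append]
      refine ⟨hl.1, cD, ?_⟩
      intro x hx y hy
      rw [hl.2.2.1] at hx
      simp only [Option.mem_def, Option.some_inj] at hx
      subst hx
      exact jv y hy
    · intro x hx y hy
      have : ((u :: mid) ++ D).head? = some u := by
        rw [List.head?_append, List.head?_cons, Option.some_or]
      rw [this] at hy
      simp only [Option.mem_def, Option.some_inj] at hy
      subst hy
      exact jA x hx u (by simp)
  · -- head?
    have h1 := hP.2.1
    rw [List.head?_append, List.head?_cons] at h1
    rw [List.append_assoc, List.head?_append, List.head?_append, List.head?_cons,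
      Option.some_or]
    exact h1
  · -- getLast?
    have h1 := hQ.2.2.1
    rw [aux_getLast?_append (by simp)] at h1
    rw [List.append_assoc, aux_getLast?_append (show (u :: mid) ++ D ≠ [] by simp)]
    cases D with
    | nil =>
      rw [List.append_nil, hl.2.2.1]
      simpa using h1
    | cons d ds =>
      rw [aux_getLast?_append (show d :: ds ≠ [] by simp)]
      rw [List.getLast?_cons_cons] at h1
      exact h1
  · -- nodup
    rw [List.append_assoc, List.nodup_append]
    refine ⟨nA, ?_, ?_⟩
    · rw [List.nodup_append]
      refine ⟨hl.2.2.2, nD, ?_⟩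
      intro x hx y hxD hxy; subst hxy
      by_cases hxv : x = v
      · exact hvDn (hxv ▸ hxD)
      · exact hdag v ((hvD x hxD).trans (hlv x hx hxv))
    · intro x hxA y hx hxy; subst hxy
      rcases List.mem_append.mp hx with hxl | hxD
      · rcases List.mem_cons.mp hxl with rfl | hxm
        · exact huA hxA
        · exact hdag u ((hul x hxm).trans (hAu x hxA))
      · exact hdag x (((hAu x hxA).trans huvT).trans (hvD x hxD))

end Key

/-- For a DAG with source `s` and destination `t` in which every vertex and edge lies on
some directed `s`-`t` path, a set `T` of vertices is a tracking set (distinct `s`-`t`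
paths have distinct intersections of their vertex sets with `T`) if and only if `T`
satisfies the tracking set condition: for every `u, v ∈ T ∪ {s, t}` there is at most one
directed `u`-`v` path all of whose vertices lie in `V ∖ (T ∖ {u, v})`. -/
theorem dag_trackingSet_iff_condition {V : Type*} [Fintype V]
    (E : V → V → Prop) (hdag : ∀ v, ¬ Relation.TransGen E v v)
    (s t : V) (hst : s ≠ t)
    (hvert : ∀ v : V, ∃ l, IsPathList E s t l ∧ v ∈ l)
    (hedge : ∀ a b : V, E a b → ∃ l, IsPathList E s t l ∧ [a, b] <:+: l)
    (T : Set V) :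
    (∀ l₁ l₂ : List V, IsPathList E s t l₁ → IsPathList E s t l₂ → l₁ ≠ l₂ →
        T ∩ {v | v ∈ l₁} ≠ T ∩ {v | v ∈ l₂}) ↔
    (∀ u ∈ T ∪ {s, t}, ∀ v ∈ T ∪ {s, t},
        ∀ l₁ l₂ : List V, IsPathList E u v l₁ → IsPathList E u v l₂ →
          (∀ w ∈ l₁, w ∉ T \ {u, v}) → (∀ w ∈ l₂, w ∉ T \ {u, v}) → l₁ = l₂) := by
  classical
  constructor
  · -- tracking set ⇒ condition
    intro htrack u hu v hv l₁ l₂ h₁ h₂ ha₁ ha₂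
    by_contra hne
    by_cases huv : u = v
    · subst huv
      exact hne ((aux_single h₁).trans (aux_single h₂).symm)
    · obtain ⟨P, hP, hmemu⟩ := hvert u
      obtain ⟨A, B, rfl⟩ := List.append_of_mem hmemu
      obtain ⟨Q, hQ, hmemv⟩ := hvert v
      obtain ⟨C, D, rfl⟩ := List.append_of_mem hmemv
      have sp₁ := aux_splice hdag huv hP hQ h₁
      have sp₂ := aux_splice hdag huv hP hQ h₂
      have memu₁ : u ∈ l₁ := by obtain ⟨m, hm⟩ := aux_head_eq h₁; rw [hm]; simp
      have memu₂ : u ∈ l₂ := by obtain ⟨m, hm⟩ := aux_head_eq h₂; rw [hm]; simp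
      have memv₁ : v ∈ l₁ := aux_mem_getLast? h₁.2.2.1
      have memv₂ : v ∈ l₂ := aux_mem_getLast? h₂.2.2.1
      refine htrack _ _ sp₁ sp₂ ?_ ?_
      · intro h
        exact hne (List.append_cancel_left (List.append_cancel_right h))
      · ext x
        simp only [Set.mem_inter_iff, Set.mem_setOf_eq, List.mem_append]
        constructor
        · rintro ⟨hxT, hx⟩
          refine ⟨hxT, ?_⟩
          rcases hx with (hA | hl) | hD
          · exact Or.inl (Or.inl hA)
          · have hx' : x = u ∨ x = v := by
              by_contra hc
              push_neg at hc
              exact ha₁ x hl ⟨hxT, by simp [hc.1, hc.2]⟩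
            rcases hx' with rfl | rfl
            · exact Or.inl (Or.inr memu₂)
            · exact Or.inl (Or.inr memv₂)
          · exact Or.inr hD
        · rintro ⟨hxT, hx⟩
          refine ⟨hxT, ?_⟩
          rcases hx with (hA | hl) | hD
          · exact Or.inl (Or.inl hA)
          · have hx' : x = u ∨ x = v := by
              by_contra hc
              push_neg at hc
              exact ha₂ x hl ⟨hxT, by simp [hc.1, hc.2]⟩
            rcases hx' with rfl | rfl
            · exact Or.inl (Or.inr memu₁)
            · exact Or.inl (Or.inr memv₁)
          · exact Or.inr hD
  · -- condition ⇒ tracking set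
    intro hcond l₁ l₂ h₁ h₂ hne heq
    set S : Set V := T ∪ {s, t} with hS
    have hsS : s ∈ S := by simp [hS]
    have htS : t ∈ S := by simp [hS]
    have hcond' : ∀ u ∈ S, ∀ v ∈ S, ∀ p₁ p₂ : List V, IsPathList E u v p₁ →
        IsPathList E u v p₂ → (∀ w ∈ p₁, w ∈ S → w = u ∨ w = v) →
        (∀ w ∈ p₂, w ∈ S → w = u ∨ w = v) → p₁ = p₂ := by
      intro u hu v hv p₁ p₂ hp₁ hp₂ a₁ a₂
      refine hcond u hu v hv p₁ p₂ hp₁ hp₂ ?_ ?_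
      · intro w hw hwd
        obtain ⟨hwT, hw'⟩ := hwd
        rcases a₁ w hw (Or.inl hwT) with rfl | rfl
        · exact hw' (by simp)
        · exact hw' (by simp)
      · intro w hw hwd
        obtain ⟨hwT, hw'⟩ := hwd
        rcases a₂ w hw (Or.inl hwT) with rfl | rfl
        · exact hw' (by simp)
        · exact hw' (by simp)
    haveI : IsAntisymm V (Relation.TransGen E) :=
      ⟨fun a b h1 h2 => absurd (h1.trans h2) (hdag a)⟩
    have hs₁ : s ∈ l₁ := by obtain ⟨m, hm⟩ := aux_head_eq h₁; rw [hm]; simp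
    have hs₂ : s ∈ l₂ := by obtain ⟨m, hm⟩ := aux_head_eq h₂; rw [hm]; simp
    have ht₁ : t ∈ l₁ := aux_mem_getLast? h₁.2.2.1
    have ht₂ : t ∈ l₂ := aux_mem_getLast? h₂.2.2.1
    have hmemiff : ∀ x, (x ∈ l₁ ∧ x ∈ S) ↔ (x ∈ l₂ ∧ x ∈ S) := by
      intro x
      have hx := Set.ext_iff.mp heq x
      simp only [Set.mem_inter_iff, Set.mem_setOf_eq] at hx
      constructor
      · rintro ⟨hx₁, hxS⟩
        refine ⟨?_, hxS⟩
        rcases hxS with hxT | hxst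
        · exact (hx.mp ⟨hxT, hx₁⟩).2
        · rcases hxst with rfl | rfl
          · exact hs₂
          · exact ht₂
      · rintro ⟨hx₂, hxS⟩
        refine ⟨?_, hxS⟩
        rcases hxS with hxT | hxst
        · exact (hx.mpr ⟨hxT, hx₂⟩).2
        · rcases hxst with rfl | rfl
          · exact hs₁
          · exact ht₁
    have hfil : l₁.filter (fun x => decide (x ∈ S)) = l₂.filter (fun x => decide (x ∈ S)) := by
      refine (fun hp hs₁ hs₂ => List.Perm.eq_of_pairwise (le := Relation.TransGen E)
        (fun a b _ _ x y => absurd (x.trans y) (hdag a)) hs₁ hs₂ hp) ?_ ?_ ?_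
      · rw [List.perm_ext_iff_of_nodup (h₁.2.2.2.filter _) (h₂.2.2.2.filter _)]
        intro x
        simp only [List.mem_filter, decide_eq_true_eq]
        exact hmemiff x
      · exact List.Pairwise.sublist List.filter_sublist (aux_pairwise h₁.1)
      · exact List.Pairwise.sublist List.filter_sublist (aux_pairwise h₂.1)
    exact hne (aux_key S t htS hcond' l₁.length s l₁ l₂ le_rfl hsS h₁ h₂ hfil)
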